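/- For every complex number q with 0 < |q| < 1, the following identity holds: ∑_{n=0}^{∞} q^{n²}/(q^{n+1};q)_n = ∑_{j=0}^{∞} (q^{j²} − q^{(j+1)²}) · ∑_{i=0}^{j} q^{−i(j−i)} C_q(j+i, 2i), both series converging absolutely. -/

import Mathlib

/-- The q-Pochhammer symbol `(a;q)_m = ∏_{l=0}^{m-1} (1 - a q^l)`. -/
noncomputable def qPoch (a q : ℂ) (m : ℕ) : ℂ := ∏ l ∈ Finset.range m, (1 - a * q ^ l)

/-- The Gaussian binomial coefficient `C_q(m,r) = (q;q)_m / ((q;q)_r (q;q)_{m-r})`. -/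
noncomputable def qBinom (q : ℂ) (m r : ℕ) : ℂ :=
  qPoch q q m / (qPoch q q r * qPoch q q (m - r))

/-!
Put `t n k = (q^{2n+1};q)_k / (q;q)_k · q^{k²+nk} · (1 - q^{2n+2k+1})`. Since
`C_q(2n+k, 2n) = (q^{2n+1};q)_k / (q;q)_k`, the `j`-th term of the right-hand side is
`∑_{n+k=j} q^{n²} t n k`: the right-hand side sums the absolutely convergent double series
`∑_{n,k} q^{n²} t n k` along antidiagonals. Summed along rows it gives the left-hand side, because
`∑_k t n k = 1 / (q^{n+1};q)_n`: both sides satisfy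
`(1 - q^{n+1}) s n = (1 - q^{2n+1}) (1 - q^{2n+2}) s (n+1)` (for the series by creative
telescoping in `k`), and both tend to `1` as `n → ∞`.
-/

open Filter Topology Finset

theorem geom_sum_le_inv_one_sub {x : ℝ} (hx : 0 ≤ x) (hx1 : x < 1) (m : ℕ) :
    ∑ l ∈ range m, x ^ l ≤ (1 - x)⁻¹ := by
  have := geom_sum_Ico_le_of_lt_one (m := 0) (n := m) hx hx1
  rwa [← range_eq_Ico, pow_zero, one_div] at this

theorem Real.exp_neg_div_le_one_sub {x r : ℝ} (hx : 0 ≤ x) (hxr : x ≤ r) (hr : r < 1) :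
    Real.exp (-(x / (1 - r))) ≤ 1 - x := by
  have hx1 : 0 < 1 - x := by linarith
  rw [← Real.le_log_iff_exp_le hx1]
  calc -(x / (1 - r)) ≤ -(x / (1 - x)) := by gcongr
    _ = 1 - (1 - x)⁻¹ := by field_simp; abel
    _ ≤ Real.log (1 - x) := Real.one_sub_inv_le_log_of_pos hx1

theorem norm_prod_one_sub_sub_one_le {R : Type*} [NormedCommRing R] [NormOneClass R]
    (z : ℕ → R) (m : ℕ) :
    ‖∏ l ∈ range m, (1 - z l) - 1‖ ≤ ∏ l ∈ range m, (1 + ‖z l‖) - 1 := by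
  induction m with
  | zero => simp
  | succ m ih =>
    have hB : 1 ≤ ∏ l ∈ range m, (1 + ‖z l‖) :=
      Finset.one_le_prod fun l _ ↦ le_add_of_nonneg_right (norm_nonneg _)
    rw [prod_range_succ, prod_range_succ,
      show (∏ l ∈ range m, (1 - z l)) * (1 - z m) - 1
        = (∏ l ∈ range m, (1 - z l) - 1) * (1 - z m) - z m by ring]
    calc _ ≤ ‖∏ l ∈ range m, (1 - z l) - 1‖ * (1 + ‖z m‖) + ‖z m‖ := by
          refine (norm_sub_le _ _).trans (add_le_add_left ((norm_mul_le _ _).trans ?_) _)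
          gcongr
          simpa using norm_sub_le (1 : R) (z m)
      _ ≤ (∏ l ∈ range m, (1 + ‖z l‖) - 1) * (1 + ‖z m‖) + ‖z m‖ := by gcongr
      _ = _ := by ring

section UnitDisc

variable {𝕜 : Type*} [NormedDivisionRing 𝕜] {q : 𝕜}

theorem norm_pow_lt_one (hq : ‖q‖ < 1) {m : ℕ} (hm : m ≠ 0) : ‖q ^ m‖ < 1 := by
  rw [norm_pow]
  exact pow_lt_one₀ (norm_nonneg q) hq hm

theorem norm_pow_le_one (hq : ‖q‖ ≤ 1) (m : ℕ) : ‖q ^ m‖ ≤ 1 := by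
  rw [norm_pow]
  exact pow_le_one₀ (norm_nonneg q) hq

theorem one_sub_pow_ne_zero (hq : ‖q‖ < 1) {m : ℕ} (hm : m ≠ 0) : 1 - q ^ m ≠ 0 := by
  refine sub_ne_zero.mpr fun h ↦ ?_
  have := norm_pow_lt_one hq hm
  rw [← h, norm_one] at this
  exact this.false

theorem norm_one_sub_pow_le_two (hq : ‖q‖ ≤ 1) (m : ℕ) : ‖1 - q ^ m‖ ≤ 2 := by
  linarith [norm_sub_le (1 : 𝕜) (q ^ m), norm_one (α := 𝕜), norm_pow_le_one hq m]

theorem norm_one_add_pow_le_two (hq : ‖q‖ ≤ 1) (m : ℕ) : ‖1 + q ^ m‖ ≤ 2 := by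
  linarith [norm_add_le (1 : 𝕜) (q ^ m), norm_one (α := 𝕜), norm_pow_le_one hq m]

end UnitDisc

section Antidiagonal

variable {A E : Type*} [AddCommMonoid A] [HasAntidiagonal A] [NormedAddCommGroup E]
  {F : A × A → E}

theorem Summable.sum_antidiagonal [CompleteSpace E] (hF : Summable F) :
    Summable fun n ↦ ∑ p ∈ antidiagonal n, F p := by
  have := (HasAntidiagonal.sigmaAntidiagonalEquivProd.summable_iff.mpr hF).sigma
  simpa only [Function.comp_apply, HasAntidiagonal.sigmaAntidiagonalEquivProd_apply, tsum_fintype,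
    sum_coe_sort] using this

theorem Summable.tsum_eq_tsum_sum_antidiagonal [CompleteSpace E] (hF : Summable F) :
    ∑' p, F p = ∑' n, ∑ p ∈ antidiagonal n, F p := by
  let e := HasAntidiagonal.sigmaAntidiagonalEquivProd (A := A)
  have he : Summable fun c ↦ F (e c) := e.summable_iff.mpr hF
  rw [← e.tsum_eq, he.tsum_sigma]
  simp only [e, HasAntidiagonal.sigmaAntidiagonalEquivProd_apply, tsum_fintype, sum_coe_sort]

theorem summable_norm_sum_antidiagonal (hF : Summable fun p ↦ ‖F p‖) :
    Summable fun n ↦ ‖∑ p ∈ antidiagonal n, F p‖ :=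
  hF.sum_antidiagonal.of_nonneg_of_le (fun _ ↦ norm_nonneg _) fun _ ↦ norm_sum_le _ _

end Antidiagonal

theorem summable_norm_tsum_prod_mk {β γ E : Type*} [NormedAddCommGroup E] [CompleteSpace E]
    {F : β × γ → E} (hF : Summable fun p ↦ ‖F p‖) : Summable fun b ↦ ‖∑' c, F (b, c)‖ :=
  hF.prod.of_nonneg_of_le (fun _ ↦ norm_nonneg _) fun b ↦
    norm_tsum_le_tsum_norm (hF.prod_factor b)

theorem tsum_sub_succ_of_tendsto_zero {E : Type*} [NormedAddCommGroup E] {f : ℕ → E}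
    (hs : Summable fun k ↦ f k - f (k + 1)) (hf : Tendsto f atTop (𝓝 0)) :
    ∑' k, (f k - f (k + 1)) = f 0 := by
  refine (hs.hasSum_iff_tendsto_nat.mpr ?_).tsum_eq
  simp_rw [sum_range_sub']
  simpa using tendsto_const_nhds.sub hf

theorem eq_of_tendsto_of_succ_eq {α : Type*} [TopologicalSpace α] [T2Space α] {E : ℕ → α} {a : α}
    (hE : ∀ m, E (m + 1) = E m) (hlim : Tendsto E atTop (𝓝 a)) (n : ℕ) : E n = a := by
  have hconst : ∀ m, E m = E 0 := fun m ↦ by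
    induction m with
    | zero => rfl
    | succ m ih => rw [hE, ih]
  rw [hconst n]
  exact tendsto_nhds_unique (tendsto_const_nhds.congr fun m ↦ (hconst m).symm) hlim

section QPochhammer

variable {a q : ℂ}

theorem qPoch_one (a q : ℂ) : qPoch a q 1 = 1 - a := by
  simp [qPoch]

theorem qPoch_two (a q : ℂ) : qPoch a q 2 = (1 - a) * (1 - a * q) := by
  simp [qPoch, prod_range_succ]

theorem qPoch_succ (a q : ℂ) (m : ℕ) : qPoch a q (m + 1) = qPoch a q m * (1 - a * q ^ m) :=
  prod_range_succ _ _

theorem qPoch_add (a q : ℂ) (m k : ℕ) :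
    qPoch a q (m + k) = qPoch a q m * qPoch (a * q ^ m) q k := by
  simp only [qPoch, prod_range_add, mul_assoc, ← pow_add]

theorem qPoch_add_comm (a q : ℂ) (m k : ℕ) :
    qPoch a q m * qPoch (a * q ^ m) q k = qPoch a q k * qPoch (a * q ^ k) q m := by
  rw [← qPoch_add, ← qPoch_add, add_comm]

theorem qPoch_ne_zero (ha : ‖a‖ < 1) (hq : ‖q‖ ≤ 1) (m : ℕ) : qPoch a q m ≠ 0 := by
  refine prod_ne_zero_iff.mpr fun l _ h ↦ ?_
  have : ‖a * q ^ l‖ < 1 := by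
    rw [norm_mul]
    exact mul_lt_one_of_nonneg_of_lt_one_left (norm_nonneg a) ha (norm_pow_le_one hq l)
  rw [← sub_eq_zero.mp h, norm_one] at this
  exact this.false

theorem qBinom_add_left (hq : ‖q‖ < 1) (m k : ℕ) :
    qBinom q (m + k) m = qPoch (q ^ (m + 1)) q k / qPoch q q k := by
  rw [qBinom, Nat.add_sub_cancel_left, qPoch_add, ← pow_succ',
    mul_div_mul_left _ _ (qPoch_ne_zero hq hq.le m)]

theorem norm_qPoch_sub_one_le (hq : ‖q‖ < 1) (a : ℂ) (m : ℕ) :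
    ‖qPoch a q m - 1‖ ≤ Real.exp (‖a‖ * (1 - ‖q‖)⁻¹) - 1 := by
  refine (norm_prod_one_sub_sub_one_le (fun l ↦ a * q ^ l) m).trans (sub_le_sub_right ?_ 1)
  refine (Real.prod_one_add_le_exp_sum _ fun _ ↦ norm_nonneg _).trans (Real.exp_le_exp.mpr ?_)
  simp only [norm_mul, norm_pow, ← mul_sum]
  exact mul_le_mul_of_nonneg_left (geom_sum_le_inv_one_sub (norm_nonneg q) hq m) (norm_nonneg a)

theorem norm_qPoch_le (hq : ‖q‖ < 1) (a : ℂ) (m : ℕ) :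
    ‖qPoch a q m‖ ≤ Real.exp (‖a‖ * (1 - ‖q‖)⁻¹) := by
  have := (norm_le_norm_sub_add (qPoch a q m) 1).trans
    (add_le_add_left (norm_qPoch_sub_one_le hq a m) ‖(1 : ℂ)‖)
  rwa [norm_one, sub_add_cancel] at this

theorem exp_neg_le_norm_qPoch {r : ℝ} (hq : ‖q‖ < 1) (ha : ‖a‖ ≤ r) (hr : r < 1) (m : ℕ) :
    Real.exp (-(r * (1 - ‖q‖)⁻¹ / (1 - r))) ≤ ‖qPoch a q m‖ := by
  have hx : ∀ l, ‖a * q ^ l‖ ≤ r := fun l ↦ by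
    rw [norm_mul]
    exact (mul_le_of_le_one_right (norm_nonneg a) (norm_pow_le_one hq.le l)).trans ha
  have hsum : ∑ l ∈ range m, ‖a * q ^ l‖ / (1 - r) ≤ r * (1 - ‖q‖)⁻¹ / (1 - r) := by
    simp only [← sum_div, norm_mul, norm_pow, ← mul_sum]
    gcongr
    · exact (norm_nonneg a).trans ha
    · exact geom_sum_le_inv_one_sub (norm_nonneg q) hq m
  rw [qPoch, norm_prod]
  calc Real.exp (-(r * (1 - ‖q‖)⁻¹ / (1 - r)))
      ≤ Real.exp (∑ l ∈ range m, -(‖a * q ^ l‖ / (1 - r))) := by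
        rw [sum_neg_distrib]; exact Real.exp_le_exp.mpr (neg_le_neg hsum)
    _ = ∏ l ∈ range m, Real.exp (-(‖a * q ^ l‖ / (1 - r))) := Real.exp_sum _ _
    _ ≤ ∏ l ∈ range m, ‖1 - a * q ^ l‖ := by
        refine prod_le_prod (fun _ _ ↦ (Real.exp_pos _).le) fun l _ ↦ ?_
        refine (Real.exp_neg_div_le_one_sub (norm_nonneg _) (hx l) hr).trans ?_
        simpa using norm_sub_norm_le (1 : ℂ) (a * q ^ l)

theorem tendsto_qPoch_nhds_one {ι : Type*} {l : Filter ι} {a : ι → ℂ} {m : ι → ℕ}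
    (hq : ‖q‖ < 1) (ha : Tendsto a l (𝓝 0)) :
    Tendsto (fun i ↦ qPoch (a i) q (m i)) l (𝓝 1) := by
  rw [tendsto_iff_norm_sub_tendsto_zero]
  refine squeeze_zero (fun _ ↦ norm_nonneg _) (fun i ↦ norm_qPoch_sub_one_le hq (a i) (m i)) ?_
  have : Tendsto (fun i ↦ Real.exp (‖a i‖ * (1 - ‖q‖)⁻¹)) l (𝓝 (Real.exp (0 * (1 - ‖q‖)⁻¹))) :=
    (Real.continuous_exp.tendsto _).comp ((tendsto_norm_zero.comp ha).mul_const _)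
  simpa using this.sub_const 1

end QPochhammer

namespace MockThetaSeven

variable {q : ℂ}

noncomputable def coeff (q : ℂ) (n k : ℕ) : ℂ :=
  qPoch (q ^ (2 * n + 1)) q k / qPoch q q k * q ^ (k ^ 2 + n * k)

noncomputable def term (q : ℂ) (n k : ℕ) : ℂ := coeff q n k * (1 - q ^ (2 * n + 2 * k + 1))

/-- Zeilberger's certificate for the recurrence in `n` satisfied by `∑ₖ term q n k`. -/
noncomputable def cert (q : ℂ) (n k : ℕ) : ℂ :=
  coeff q n k * ((1 - q ^ k) * (1 + q ^ (3 * n + 2 * k + 2)) - q ^ (n + 1) * (1 - q ^ (2 * k)))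

theorem coeff_succ_left (q : ℂ) (n k : ℕ) :
    (1 - q ^ (2 * n + 1)) * (1 - q ^ (2 * n + 2)) * coeff q (n + 1) k
      = (1 - q ^ (2 * n + k + 1)) * (1 - q ^ (2 * n + k + 2)) * q ^ k * coeff q n k := by
  have h := qPoch_add_comm (q ^ (2 * n + 1)) q 2 k
  simp only [qPoch_two, ← pow_add, ← pow_succ] at h
  rw [show 2 * n + 1 + 2 = 2 * (n + 1) + 1 by ring] at h
  simp only [coeff]
  linear_combination (q ^ (k ^ 2 + n * k + k) / qPoch q q k) * h

theorem coeff_succ_right (hq : ‖q‖ < 1) (n k : ℕ) :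
    (1 - q ^ (k + 1)) * coeff q n (k + 1)
      = (1 - q ^ (2 * n + k + 1)) * q ^ (2 * k + n + 1) * coeff q n k := by
  have hQ : qPoch q q k ≠ 0 := qPoch_ne_zero hq hq.le k
  have hk : 1 - q ^ (k + 1) ≠ 0 := one_sub_pow_ne_zero hq k.succ_ne_zero
  rw [coeff, coeff, qPoch_succ, qPoch_succ, ← pow_succ', ← pow_add]
  field_simp
  ring

theorem term_sub_term_succ (hq : ‖q‖ < 1) (n k : ℕ) :
    (1 - q ^ (n + 1)) * term q n k
        - (1 - q ^ (2 * n + 1)) * (1 - q ^ (2 * n + 2)) * term q (n + 1) k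
      = cert q n k - cert q n (k + 1) := by
  refine mul_left_cancel₀ (one_sub_pow_ne_zero (m := k + 1) hq (by omega)) ?_
  simp only [term, cert]
  linear_combination
    (-(1 - q ^ (k + 1)) * (1 - q ^ (2 * (n + 1) + 2 * k + 1))) * coeff_succ_left q n k
      + ((1 - q ^ (k + 1)) * (1 + q ^ (3 * n + 2 * (k + 1) + 2))
          - q ^ (n + 1) * (1 - q ^ (2 * (k + 1)))) * coeff_succ_right hq n k

theorem exists_norm_coeff_le (hq : ‖q‖ < 1) :
    ∃ K, 0 ≤ K ∧ ∀ n k, ‖coeff q n k‖ ≤ K * ‖q‖ ^ (k ^ 2 + n * k) := by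
  refine ⟨Real.exp (‖q‖ * (1 - ‖q‖)⁻¹) / Real.exp (-(‖q‖ * (1 - ‖q‖)⁻¹ / (1 - ‖q‖))),
    by positivity, fun n k ↦ ?_⟩
  rw [coeff, norm_mul, norm_div, norm_pow]
  gcongr
  · refine (norm_qPoch_le hq _ k).trans ?_
    gcongr
    rw [norm_pow]
    exact pow_le_of_le_one (norm_nonneg q) hq.le (by omega)
  · exact exp_neg_le_norm_qPoch hq le_rfl hq k

theorem exists_norm_term_le (hq : ‖q‖ < 1) :
    ∃ K, 0 ≤ K ∧ ∀ n k, ‖term q n k‖ ≤ K * ‖q‖ ^ (k ^ 2 + n * k) := by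
  obtain ⟨K, hK0, hK⟩ := exists_norm_coeff_le hq
  refine ⟨K * 2, by positivity, fun n k ↦ ?_⟩
  rw [term, norm_mul, mul_right_comm]
  exact mul_le_mul (hK n k) (norm_one_sub_pow_le_two hq.le _) (norm_nonneg _)
    ((norm_nonneg _).trans (hK n k))

theorem exists_norm_cert_le (hq : ‖q‖ < 1) :
    ∃ K, 0 ≤ K ∧ ∀ n k, ‖cert q n k‖ ≤ K * ‖q‖ ^ (k ^ 2 + n * k) := by
  obtain ⟨K, hK0, hK⟩ := exists_norm_coeff_le hq
  refine ⟨K * 6, by positivity, fun n k ↦ ?_⟩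
  rw [cert, norm_mul, mul_right_comm]
  refine mul_le_mul (hK n k) ?_ (norm_nonneg _) ((norm_nonneg _).trans (hK n k))
  calc _ ≤ ‖1 - q ^ k‖ * ‖1 + q ^ (3 * n + 2 * k + 2)‖ + ‖q ^ (n + 1)‖ * ‖1 - q ^ (2 * k)‖ := by
        rw [← norm_mul, ← norm_mul]
        exact norm_sub_le _ _
    _ ≤ 2 * 2 + 1 * 2 := by
        gcongr
        exacts [norm_one_sub_pow_le_two hq.le _, norm_one_add_pow_le_two hq.le _,
          norm_pow_le_one hq.le _, norm_one_sub_pow_le_two hq.le _]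
    _ = 6 := by norm_num

theorem summable_term (hq : ‖q‖ < 1) (n : ℕ) : Summable (term q n) := by
  obtain ⟨K, hK0, hK⟩ := exists_norm_term_le hq
  refine Summable.of_norm_bounded ((summable_geometric_of_lt_one (norm_nonneg q) hq).mul_left K)
    fun k ↦ (hK n k).trans (mul_le_mul_of_nonneg_left ?_ hK0)
  exact pow_le_pow_of_le_one (norm_nonneg q) hq.le (by nlinarith)

theorem summable_norm_sq_mul_term (hq : ‖q‖ < 1) :
    Summable fun p : ℕ × ℕ ↦ ‖q ^ (p.1 ^ 2) * term q p.1 p.2‖ := by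
  obtain ⟨K, hK0, hK⟩ := exists_norm_term_le hq
  have hgeom := summable_geometric_of_lt_one (norm_nonneg q) hq
  refine .of_nonneg_of_le (fun _ ↦ norm_nonneg _) (fun ⟨n, k⟩ ↦ ?_)
    ((hgeom.mul_of_nonneg hgeom (fun _ ↦ by positivity) fun _ ↦ by positivity).mul_left K)
  calc ‖q ^ (n ^ 2) * term q n k‖ ≤ ‖q‖ ^ (n ^ 2) * (K * ‖q‖ ^ (k ^ 2 + n * k)) := by
        rw [norm_mul, norm_pow]; gcongr; exact hK n k
    _ = K * ‖q‖ ^ (n ^ 2 + k ^ 2 + n * k) := by ring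
    _ ≤ K * (‖q‖ ^ n * ‖q‖ ^ k) := by
        rw [← pow_add]
        exact mul_le_mul_of_nonneg_left
          (pow_le_pow_of_le_one (norm_nonneg q) hq.le
            (by nlinarith [Nat.le_self_pow two_ne_zero n, Nat.le_self_pow two_ne_zero k])) hK0

theorem tendsto_cert (hq : ‖q‖ < 1) (n : ℕ) : Tendsto (cert q n) atTop (𝓝 0) := by
  obtain ⟨K, hK0, hK⟩ := exists_norm_cert_le hq
  refine squeeze_zero_norm (fun k ↦ (hK n k).trans (mul_le_mul_of_nonneg_left ?_ hK0))
    (by simpa using (tendsto_pow_atTop_nhds_zero_of_lt_one (norm_nonneg q) hq).const_mul K)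
  exact pow_le_pow_of_le_one (norm_nonneg q) hq.le (by nlinarith)

theorem tsum_term_recurrence (hq : ‖q‖ < 1) (n : ℕ) :
    (1 - q ^ (n + 1)) * ∑' k, term q n k
      = (1 - q ^ (2 * n + 1)) * (1 - q ^ (2 * n + 2)) * ∑' k, term q (n + 1) k := by
  have h0 := (summable_term hq n).mul_left (1 - q ^ (n + 1))
  have h1 := (summable_term hq (n + 1)).mul_left ((1 - q ^ (2 * n + 1)) * (1 - q ^ (2 * n + 2)))
  rw [← sub_eq_zero, ← tsum_mul_left, ← tsum_mul_left, ← h0.tsum_sub h1]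
  simp_rw [term_sub_term_succ hq]
  rw [tsum_sub_succ_of_tendsto_zero ?_ (tendsto_cert hq n)]
  · simp [cert, coeff, qPoch]
  · exact (h0.sub h1).congr (term_sub_term_succ hq n)

theorem tendsto_tsum_term (hq : ‖q‖ < 1) : Tendsto (fun n ↦ ∑' k, term q n k) atTop (𝓝 1) := by
  obtain ⟨K, hK0, hK⟩ := exists_norm_term_le hq
  have hgeom := tendsto_pow_atTop_nhds_zero_of_lt_one (norm_nonneg q) hq
  have hlim : ∀ k, Tendsto (fun n ↦ term q n k) atTop (𝓝 (if k = 0 then 1 else 0)) := by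
    rintro (_ | k)
    · have : Tendsto (fun n ↦ q ^ (2 * n + 1)) atTop (𝓝 0) :=
        squeeze_zero_norm (fun n ↦ by
          rw [norm_pow]; exact pow_le_pow_of_le_one (norm_nonneg q) hq.le (by omega)) hgeom
      simpa [term, coeff, qPoch] using tendsto_const_nhds.sub this
    · refine squeeze_zero_norm (fun n ↦ (hK n (k + 1)).trans (mul_le_mul_of_nonneg_left
        (pow_le_pow_of_le_one (norm_nonneg q) hq.le (by nlinarith)) hK0)) ?_
      simpa using hgeom.const_mul K
  have := tendsto_tsum_of_dominated_convergence
    ((summable_geometric_of_lt_one (norm_nonneg q) hq).mul_left K) hlim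
    (.of_forall fun n k ↦ (hK n k).trans (mul_le_mul_of_nonneg_left
      (pow_le_pow_of_le_one (norm_nonneg q) hq.le (by nlinarith)) hK0))
  simpa using this

theorem one_sub_pow_mul_qPoch (q : ℂ) (n : ℕ) :
    (1 - q ^ (n + 1)) * qPoch (q ^ (n + 2)) q (n + 1)
      = (1 - q ^ (2 * n + 1)) * (1 - q ^ (2 * n + 2)) * qPoch (q ^ (n + 1)) q n := by
  have h := qPoch_add (q ^ (n + 1)) q 1 (n + 1)
  rw [show 1 + (n + 1) = n + 2 by ring, qPoch_add, qPoch_two, qPoch_one, ← pow_add, ← pow_add,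
    show n + 1 + 1 = n + 2 by ring, show n + 1 + n = 2 * n + 1 by ring] at h
  linear_combination -h

theorem tsum_term_mul_qPoch (hq : ‖q‖ < 1) (n : ℕ) :
    (∑' k, term q n k) * qPoch (q ^ (n + 1)) q n = 1 := by
  refine eq_of_tendsto_of_succ_eq (E := fun n ↦ (∑' k, term q n k) * qPoch (q ^ (n + 1)) q n)
    (fun m ↦ mul_left_cancel₀ (one_sub_pow_ne_zero (m := m + 1) hq (by omega)) ?_) ?_ n
  · calc (1 - q ^ (m + 1)) * ((∑' k, term q (m + 1) k) * qPoch (q ^ (m + 1 + 1)) q (m + 1))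
        = (∑' k, term q (m + 1) k) * ((1 - q ^ (m + 1)) * qPoch (q ^ (m + 2)) q (m + 1)) := by
          ring
      _ = ((1 - q ^ (2 * m + 1)) * (1 - q ^ (2 * m + 2)) * ∑' k, term q (m + 1) k)
            * qPoch (q ^ (m + 1)) q m := by
          rw [one_sub_pow_mul_qPoch]; ring
      _ = (1 - q ^ (m + 1)) * ((∑' k, term q m k) * qPoch (q ^ (m + 1)) q m) := by
          rw [← tsum_term_recurrence hq]; ring
  · simpa using (tendsto_tsum_term hq).mul (tendsto_qPoch_nhds_one (m := id) hq
      ((tendsto_pow_atTop_nhds_zero_of_norm_lt_one hq).comp (tendsto_add_atTop_nat 1)))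

theorem tsum_sq_mul_term (hq : ‖q‖ < 1) (n : ℕ) :
    ∑' k, q ^ (n ^ 2) * term q n k = q ^ (n ^ 2) / qPoch (q ^ (n + 1)) q n := by
  rw [tsum_mul_left, eq_div_iff (qPoch_ne_zero (norm_pow_lt_one hq n.succ_ne_zero) hq.le n),
    mul_assoc, tsum_term_mul_qPoch hq, mul_one]

theorem summand_eq_sq_mul_term (hq0 : q ≠ 0) (hq : ‖q‖ < 1) {i j : ℕ} (hij : i ≤ j) :
    (q ^ (j ^ 2) - q ^ ((j + 1) ^ 2)) * (q ^ (-(i * (j - i) : ℤ)) * qBinom q (j + i) (2 * i))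
      = q ^ (i ^ 2) * term q i (j - i) := by
  obtain ⟨k, rfl⟩ := Nat.exists_eq_add_of_le hij
  have hexp : -((i : ℤ) * (((i + k : ℕ) : ℤ) - i)) = -((i * k : ℕ) : ℤ) := by push_cast; ring
  rw [Nat.add_sub_cancel_left, show i + k + i = 2 * i + k by ring, qBinom_add_left hq, hexp,
    zpow_neg, zpow_natCast, term, coeff]
  have : q ^ (i * k) ≠ 0 := pow_ne_zero _ hq0
  field_simp
  ring

theorem sum_antidiagonal_sq_mul_term (hq0 : q ≠ 0) (hq : ‖q‖ < 1) (j : ℕ) :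
    ∑ p ∈ antidiagonal j, q ^ (p.1 ^ 2) * term q p.1 p.2
      = (q ^ (j ^ 2) - q ^ ((j + 1) ^ 2)) *
          ∑ i ∈ range (j + 1), q ^ (-(i * (j - i) : ℤ)) * qBinom q (j + i) (2 * i) := by
  rw [Nat.sum_antidiagonal_eq_sum_range_succ_mk, mul_sum]
  exact sum_congr rfl fun i hi ↦
    (summand_eq_sq_mul_term hq0 hq (Nat.lt_succ_iff.mp (mem_range.mp hi))).symm

end MockThetaSeven

open MockThetaSeven in
/-- `Ẑ(−Σ(2,3,7))` from the figure-eight knot: for `0 < |q| < 1`,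
`∑_{n≥0} q^{n²}/(q^{n+1};q)_n
 = ∑_{j≥0} (q^{j²} − q^{(j+1)²}) ∑_{i=0}^{j} q^{−i(j−i)} C_q(j+i,2i)`,
both series converging absolutely. -/
theorem mock_theta_order_seven_identity (q : ℂ) (hq0 : 0 < ‖q‖) (hq1 : ‖q‖ < 1) :
    Summable (fun n : ℕ => ‖q ^ (n ^ 2) / qPoch (q ^ (n + 1)) q n‖) ∧
    Summable (fun j : ℕ =>
      ‖(q ^ (j ^ 2) - q ^ ((j + 1) ^ 2)) *
        ∑ i ∈ Finset.range (j + 1), q ^ (-(i * (j - i) : ℤ)) * qBinom q (j + i) (2 * i)‖) ∧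
    ∑' n : ℕ, q ^ (n ^ 2) / qPoch (q ^ (n + 1)) q n
      = ∑' j : ℕ, (q ^ (j ^ 2) - q ^ ((j + 1) ^ 2)) *
          ∑ i ∈ Finset.range (j + 1), q ^ (-(i * (j - i) : ℤ)) * qBinom q (j + i) (2 * i) := by
  have hF := summable_norm_sq_mul_term hq1
  have hrow := tsum_sq_mul_term hq1
  have hdiag := sum_antidiagonal_sq_mul_term (norm_pos_iff.mp hq0) hq1
  refine ⟨?_, ?_, ?_⟩
  · simpa only [hrow] using summable_norm_tsum_prod_mk hF
  · simpa only [hdiag] using summable_norm_sum_antidiagonal hF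
  · simp_rw [← hrow, ← hdiag]
    rw [← hF.of_norm.tsum_prod, hF.of_norm.tsum_eq_tsum_sum_antidiagonal]
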